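/- Let p = (0, 0, π) and let q = (a, b, π−a−b) ∈ Δ₀ (so a, b > 0 and a + b < π). Then the function t ↦ V₀((1−t)·p + t·q) is differentiable on (0,1), and its derivative tends to log( (a+b)^{a+b} / (a^a · b^b) ) as t → 0⁺; this limit is finite and positive. -/

import Mathlib

open Real Filter

/-- Milnor's Lobachevsky function `Л(x) = -∫₀ˣ log |2 sin t| dt`. -/
noncomputable def lob (x : ℝ) : ℝ := -∫ t in (0:ℝ)..x, Real.log |2 * Real.sin t|

/-- `V₀(γ₁,γ₂,γ₃) = Л(γ₁) + Л(γ₂) + Л(γ₃)`. -/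
noncomputable def V0 (γ : Fin 3 → ℝ) : ℝ := lob (γ 0) + lob (γ 1) + lob (γ 2)

/-- The set Δ₀ of angle triples of ideal tetrahedra. -/
def D0 : Set (Fin 3 → ℝ) :=
  {γ | (∀ i, 0 < γ i) ∧ γ 0 + γ 1 + γ 2 = π}

open MeasureTheory Set in
lemma integrableOn_neg_log' : IntegrableOn (fun t => -Real.log t) (Set.Ioc (0:ℝ) 1) := by
  apply intervalIntegral.integrableOn_deriv_of_nonneg (g := fun t => t - t * Real.log t)
  · exact (continuous_id.sub Real.continuous_mul_log).continuousOn
  · intro x hx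
    have h := (hasDerivAt_id x).sub (Real.hasDerivAt_mul_log hx.1.ne')
    refine h.congr_deriv ?_
    ring
  · intro x hx
    simpa using Real.log_nonpos hx.1.le hx.2.le

open MeasureTheory Set in
lemma intervalIntegrable_l2s (x : ℝ) (hx : 0 < x) (hx' : x < π) :
    IntervalIntegrable (fun t => Real.log |2 * Real.sin t|) volume 0 x := by
  set c := min x 1 with hc
  have hc0 : 0 < c := lt_min hx one_pos
  have hc1 : c ≤ 1 := min_le_right _ _
  have hcx : c ≤ x := min_le_left _ _
  have hmeas : Measurable fun t : ℝ => Real.log |2 * Real.sin t| :=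
    Real.measurable_log.comp (Real.measurable_sin.const_mul 2).abs
  have piece1 : IntervalIntegrable (fun t => Real.log |2 * Real.sin t|) volume 0 c := by
    rw [intervalIntegrable_iff_integrableOn_Ioc_of_le hc0.le]
    have hbound : IntegrableOn (fun t : ℝ => 2 + -Real.log t) (Set.Ioc 0 c) := by
      refine (integrableOn_const measure_Ioc_lt_top.ne).add ?_
      exact integrableOn_neg_log'.mono_set (Set.Ioc_subset_Ioc_right hc1)
    refine Integrable.mono' hbound (hmeas.aestronglyMeasurable.restrict) ?_
    rw [ae_restrict_iff' measurableSet_Ioc]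
    refine Filter.Eventually.of_forall fun t ht => ?_
    have ht0 : 0 < t := ht.1
    have ht1 : t ≤ 1 := ht.2.trans hc1
    have htpi2 : t ≤ π / 2 := ht1.trans (by nlinarith [Real.pi_gt_three])
    have hsinpos : 0 < Real.sin t := Real.sin_pos_of_pos_of_lt_pi ht0 (by nlinarith [Real.pi_gt_three])
    have hslb : 2 / π * t ≤ Real.sin t := Real.mul_le_sin ht0.le htpi2
    have hsub : Real.sin t ≤ t := Real.sin_le ht0.le
    rw [Real.norm_eq_abs]
    have habs : |2 * Real.sin t| = 2 * Real.sin t := abs_of_pos (by positivity)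
    rw [habs, abs_le]
    constructor
    · have h1 : Real.log (2 * (2 / π * t)) ≤ Real.log (2 * Real.sin t) :=
        Real.log_le_log (by positivity) (by nlinarith)
      have h2 : Real.log (2 * (2 / π * t)) = Real.log (4 / π) + Real.log t := by
        rw [show 2 * (2 / π * t) = 4 / π * t by ring,
          Real.log_mul (by positivity) ht0.ne']
      have h3 : (0:ℝ) ≤ Real.log (4 / π) := Real.log_nonneg (by
        rw [le_div_iff₀ Real.pi_pos]; nlinarith [Real.pi_le_four])
      simp only [neg_add, neg_neg]
      linarith
    · have h1 : Real.log (2 * Real.sin t) ≤ Real.log (2 * t) :=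
        Real.log_le_log (by positivity) (by nlinarith)
      have h2 : Real.log (2 * t) = Real.log 2 + Real.log t := Real.log_mul two_ne_zero ht0.ne'
      have h3 : Real.log t ≤ 0 := Real.log_nonpos ht0.le ht1
      have h4 : Real.log 2 < 1 := by
        have := Real.log_two_lt_d9; linarith
      linarith
  have piece2 : IntervalIntegrable (fun t => Real.log |2 * Real.sin t|) volume c x := by
    apply ContinuousOn.intervalIntegrable
    rw [uIcc_of_le hcx]
    apply ContinuousOn.log
    · exact ((continuous_const.mul Real.continuous_sin).abs).continuousOn
    · intro t ht
      have : 0 < Real.sin t := Real.sin_pos_of_pos_of_lt_pi (hc0.trans_le ht.1) (ht.2.trans_lt hx')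
      positivity
  exact piece1.trans piece2

open MeasureTheory Set in
lemma lob_hasDerivAt (x : ℝ) (hx : 0 < x) (hx' : x < π) :
    HasDerivAt lob (-Real.log |2 * Real.sin x|) x := by
  have hmeas : Measurable fun t : ℝ => Real.log |2 * Real.sin t| :=
    Real.measurable_log.comp (Real.measurable_sin.const_mul 2).abs
  have hsin : 0 < Real.sin x := Real.sin_pos_of_pos_of_lt_pi hx hx'
  have hcont : ContinuousAt (fun t : ℝ => Real.log |2 * Real.sin t|) x := by
    apply ContinuousAt.log
    · exact ((continuous_const.mul Real.continuous_sin).abs).continuousAt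
    · positivity
  have h := intervalIntegral.integral_hasDerivAt_right
    (intervalIntegrable_l2s x hx hx')
    ⟨Set.univ, Filter.univ_mem, (hmeas.aestronglyMeasurable).restrict⟩ hcont
  exact h.neg

lemma sin_div_self_tendsto' : Tendsto (fun x : ℝ => Real.sin x / x) (nhdsWithin 0 {0}ᶜ) (nhds 1) := by
  have h := hasDerivAt_iff_tendsto_slope.mp (Real.hasDerivAt_sin 0)
  simp only [Real.cos_zero] at h
  refine h.congr fun x => ?_
  simp [slope_def_field, Real.sin_zero]

lemma sin_mul_div_tendsto' {c : ℝ} (hc : 0 < c) :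
    Tendsto (fun t : ℝ => Real.sin (c * t) / (c * t)) (nhdsWithin 0 (Set.Ioi 0)) (nhds 1) := by
  apply sin_div_self_tendsto'.comp
  rw [tendsto_nhdsWithin_iff]
  constructor
  · have : Tendsto (fun t : ℝ => c * t) (nhds 0) (nhds 0) := by
      simpa using (continuous_mul_left c).tendsto (0:ℝ)
    exact this.mono_left nhdsWithin_le_nhds
  · filter_upwards [self_mem_nhdsWithin] with t ht
    exact (mul_pos hc ht).ne'

open Set in
lemma ratio_tendsto' {c d : ℝ} (hdpos : 0 < d) (hcpos : 0 < c) (hcpi : c < π) (hdpi : d < π) :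
    Tendsto (fun t : ℝ => Real.sin (c * t) / Real.sin (d * t))
      (nhdsWithin 0 (Set.Ioi 0)) (nhds (c / d)) := by
  have h1 := sin_mul_div_tendsto' hdpos
  have h2 := sin_mul_div_tendsto' hcpos
  have h3 := (h2.div h1 one_ne_zero).mul_const (c / d)
  rw [show (1:ℝ)/1 * (c/d) = c/d by norm_num] at h3
  refine h3.congr' ?_
  filter_upwards [Ioo_mem_nhdsGT_of_mem (Set.left_mem_Ico.2 one_pos)] with t ht
  have ht0 : 0 < t := ht.1
  have hdt : d * t < π := by nlinarith [mul_pos hdpos (sub_pos.2 ht.2)]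
  have hct : c * t < π := by nlinarith [mul_pos hcpos (sub_pos.2 ht.2)]
  have hsd : 0 < Real.sin (d * t) :=
    Real.sin_pos_of_pos_of_lt_pi (by positivity) hdt
  have hsc : 0 < Real.sin (c * t) :=
    Real.sin_pos_of_pos_of_lt_pi (by positivity) hct
  have ht' : t ≠ 0 := ht0.ne'
  simp only [Pi.div_apply]
  field_simp

theorem V0_badly_degenerate_boundary_derivative (a b : ℝ)
    (hq : (![a, b, π - a - b] : Fin 3 → ℝ) ∈ D0) :
    (∀ t ∈ Set.Ioo (0:ℝ) 1,
      DifferentiableAt ℝ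
        (fun t : ℝ => V0 ((1 - t) • (![0, 0, π] : Fin 3 → ℝ) + t • ![a, b, π - a - b])) t) ∧
    Tendsto
      (deriv (fun t : ℝ =>
        V0 ((1 - t) • (![0, 0, π] : Fin 3 → ℝ) + t • ![a, b, π - a - b])))
      (nhdsWithin 0 (Set.Ioi 0))
      (nhds (Real.log ((a + b) ^ (a + b) / (a ^ a * b ^ b)))) ∧
    0 < Real.log ((a + b) ^ (a + b) / (a ^ a * b ^ b)) := by
  obtain ⟨hpos, _⟩ := hq
  have ha : 0 < a := by have := hpos 0; simpa using this
  have hb : 0 < b := by have := hpos 1; simpa using this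
  have hab : a + b < π := by have := hpos 2; simp at this; linarith
  have hfun : (fun t : ℝ => V0 ((1 - t) • (![0, 0, π] : Fin 3 → ℝ) + t • ![a, b, π - a - b]))
      = fun t => lob (a * t) + lob (b * t) + lob (π - (a + b) * t) := by
    funext t
    simp only [V0, Pi.add_apply, Pi.smul_apply, smul_eq_mul,
      Matrix.cons_val_zero, Matrix.cons_val_one, Matrix.head_cons,
      Matrix.cons_val_two, Matrix.tail_cons]
    rw [show (1 - t) * 0 + t * a = a * t by ring,
        show (1 - t) * 0 + t * b = b * t by ring,
        show (1 - t) * π + t * (π - a - b) = π - (a + b) * t by ring]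
  have hD : ∀ t ∈ Set.Ioo (0:ℝ) 1, HasDerivAt
      (fun t => lob (a * t) + lob (b * t) + lob (π - (a + b) * t))
      (a * -Real.log |2 * Real.sin (a * t)| + b * -Real.log |2 * Real.sin (b * t)|
        + (a + b) * Real.log |2 * Real.sin ((a + b) * t)|) t := by
    intro t ht
    have ht1 : 0 < 1 - t := sub_pos.2 ht.2
    have hat : 0 < a * t := mul_pos ha ht.1
    have hat' : a * t < π := by nlinarith [mul_pos ha ht1]
    have hbt : 0 < b * t := mul_pos hb ht.1
    have hbt' : b * t < π := by nlinarith [mul_pos hb ht1]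
    have hct : 0 < (a + b) * t := mul_pos (by linarith) ht.1
    have hct' : (a + b) * t < π := by nlinarith [mul_pos (show (0:ℝ) < a + b by linarith) ht1]
    have h1 := (lob_hasDerivAt (a * t) hat hat').comp t
      (HasDerivAt.const_mul a (hasDerivAt_id t))
    have h2 := (lob_hasDerivAt (b * t) hbt hbt').comp t
      (HasDerivAt.const_mul b (hasDerivAt_id t))
    have h3inner : HasDerivAt (fun x : ℝ => π - (a + b) * x) (-((a + b) * 1)) t :=
      (HasDerivAt.const_mul (a + b) (hasDerivAt_id t)).const_sub π
    have h3 := (lob_hasDerivAt (π - (a + b) * t) (by linarith) (by linarith)).comp t h3inner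
    have hsum := (h1.add h2).add h3
    refine hsum.congr_deriv ?_
    rw [show Real.sin (π - (a + b) * t) = Real.sin ((a + b) * t) from Real.sin_pi_sub _]
    ring
  refine ⟨?_, ?_, ?_⟩
  · intro t ht
    rw [hfun]
    exact (hD t ht).differentiableAt
  · rw [hfun]
    -- the limit value identity
    have hvne : ((a+b):ℝ) ^ (a+b) ≠ 0 := by positivity
    have hval : Real.log ((a + b) ^ (a + b) / (a ^ a * b ^ b))
        = a * Real.log ((a + b) / a) + b * Real.log ((a + b) / b) := by
      rw [Real.log_div hvne (by positivity), Real.log_mul (by positivity) (by positivity),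
        Real.log_rpow (by linarith), Real.log_rpow ha, Real.log_rpow hb,
        Real.log_div (by positivity) ha.ne', Real.log_div (by positivity) hb.ne']
      ring
    rw [hval]
    have l1 : Tendsto (fun t : ℝ => Real.sin ((a + b) * t) / Real.sin (a * t))
        (nhdsWithin 0 (Set.Ioi 0)) (nhds ((a + b) / a)) :=
      ratio_tendsto' ha (by linarith) hab (by linarith)
    have l2 : Tendsto (fun t : ℝ => Real.sin ((a + b) * t) / Real.sin (b * t))
        (nhdsWithin 0 (Set.Ioi 0)) (nhds ((a + b) / b)) :=
      ratio_tendsto' hb (by linarith) hab (by linarith)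
    have hr1 : (0:ℝ) < (a + b) / a := by positivity
    have hr2 : (0:ℝ) < (a + b) / b := by positivity
    have l1' := ((Real.continuousAt_log hr1.ne').tendsto.comp l1).const_mul a
    have l2' := ((Real.continuousAt_log hr2.ne').tendsto.comp l2).const_mul b
    have T := l1'.add l2'
    refine T.congr' ?_
    filter_upwards [Ioo_mem_nhdsGT_of_mem (Set.left_mem_Ico.2 one_pos)] with t ht
    have ht1 : 0 < 1 - t := sub_pos.2 ht.2
    have hat : 0 < a * t := mul_pos ha ht.1
    have hat' : a * t < π := by nlinarith [mul_pos ha ht1]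
    have hbt : 0 < b * t := mul_pos hb ht.1
    have hbt' : b * t < π := by nlinarith [mul_pos hb ht1]
    have hct : 0 < (a + b) * t := mul_pos (by linarith) ht.1
    have hct' : (a + b) * t < π := by nlinarith [mul_pos (show (0:ℝ) < a + b by linarith) ht1]
    have hsa : 0 < Real.sin (a * t) := Real.sin_pos_of_pos_of_lt_pi hat hat'
    have hsb : 0 < Real.sin (b * t) := Real.sin_pos_of_pos_of_lt_pi hbt hbt'
    have hsc : 0 < Real.sin ((a + b) * t) := Real.sin_pos_of_pos_of_lt_pi hct hct'
    simp only [Function.comp_apply]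
    rw [(hD t ht).deriv,
      abs_of_pos (by positivity : (0:ℝ) < 2 * Real.sin (a * t)),
      abs_of_pos (by positivity : (0:ℝ) < 2 * Real.sin (b * t)),
      abs_of_pos (by positivity : (0:ℝ) < 2 * Real.sin ((a + b) * t)),
      Real.log_mul two_ne_zero hsa.ne', Real.log_mul two_ne_zero hsb.ne',
      Real.log_mul two_ne_zero hsc.ne',
      Real.log_div hsc.ne' hsa.ne', Real.log_div hsc.ne' hsb.ne']
    ring
  · have hvne : ((a+b):ℝ) ^ (a+b) ≠ 0 := by positivity
    have hval : Real.log ((a + b) ^ (a + b) / (a ^ a * b ^ b))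
        = a * Real.log ((a + b) / a) + b * Real.log ((a + b) / b) := by
      rw [Real.log_div hvne (by positivity), Real.log_mul (by positivity) (by positivity),
        Real.log_rpow (by linarith), Real.log_rpow ha, Real.log_rpow hb,
        Real.log_div (by positivity) ha.ne', Real.log_div (by positivity) hb.ne']
      ring
    rw [hval]
    have p1 : 0 < Real.log ((a + b) / a) := Real.log_pos (by rw [lt_div_iff₀ ha]; linarith)
    have p2 : 0 < Real.log ((a + b) / b) := Real.log_pos (by rw [lt_div_iff₀ hb]; linarith)
    have := mul_pos ha p1
    have := mul_pos hb p2
    linarith
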